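/- arXiv:1905.01921 — 6 statements merged into one kernel-verified Lean document; each statement's English description precedes it below -/
import Mathlib

section
/- Let x ∈ ℝ^n with exactly one coordinate equal to 1. Then the matrix A = (J - I) + diag(x), where J is the all-ones n×n matrix, is nonsingular. -/
theorem stmt_0 (n : ℕ) (x : Fin n → ℝ)
    (h : ∃! i : Fin n, x i = 1) :
    ((Matrix.of fun _ _ : Fin n => (1 : ℝ)) - 1 + Matrix.diagonal x).det ≠ 0 := by
  obtain ⟨i₀, hi₀, huniq⟩ := h
  intro hdet
  obtain ⟨v, hv, hAv⟩ := Matrix.exists_mulVec_eq_zero_iff.mpr hdet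
  have key : ∀ i, (∑ j, v j) - v i + x i * v i = 0 := by
    intro i
    have := congrFun hAv i
    simp only [Matrix.mulVec, dotProduct, Matrix.sub_apply, Matrix.add_apply,
      Matrix.of_apply, Matrix.one_apply, Matrix.diagonal_apply, Pi.zero_apply] at this
    have e : ∀ j, ((1 - if i = j then 1 else 0) + if i = j then x i else 0) * v j
        = v j + (if i = j then (x i - 1) * v j else 0) := by
      intro j; by_cases hij : i = j <;> simp [hij]; ring
    rw [Finset.sum_congr rfl (fun j _ => e j), Finset.sum_add_distrib,
      Finset.sum_ite_eq] at this
    simp at this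
    linarith
  have hs : (∑ j, v j) = 0 := by
    have := key i₀
    rw [hi₀] at this
    linarith
  have hvz : ∀ i, v i = 0 := by
    intro i
    by_cases hix : x i = 1
    · have hii : i = i₀ := huniq i hix
      subst hii
      have : ∀ j ∈ Finset.univ, j ≠ i → v j = 0 := by
        intro j _ hj
        have hk := key j
        have hxj : x j ≠ 1 := fun hxj => hj (huniq j hxj)
        rw [hs] at hk
        have : v j * (x j - 1) = 0 := by ring_nf; linarith
        rcases mul_eq_zero.mp this with h1 | h2
        · exact h1
        · exact absurd (by linarith) hxj
      have := Finset.sum_eq_single_of_mem i (Finset.mem_univ i) this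
      rw [hs] at this
      exact this.symm
    · have hk := key i
      rw [hs] at hk
      have : v i * (x i - 1) = 0 := by ring_nf; linarith
      rcases mul_eq_zero.mp this with h1 | h2
      · exact h1
      · exact absurd (by linarith) hix
  exact hv (funext hvz)
end

section
/- Let x ∈ ℝ^n with x_i ≠ 1 for all i and t(x) = Σ_i 1/(1-x_i) = 1. Then for any y ∈ ℝ^{n+1} with y_i = x_i for i ≤ n and y_{n+1} ≠ 1, the matrix J - I + diag(y) (of order n+1) is nonsingular. -/
/-!
With `d i = y i - 1` the matrix is `diagonal d + J`, a rank-one perturbation of an invertible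
diagonal matrix, so the matrix determinant lemma gives
`det = (∏ i, d i) * (1 + ∑ i, (d i)⁻¹) = (∏ i, (y i - 1)) * (1 - t(y))`.
Here `t(y) = t(x) + 1 / (1 - y (last n)) = 1 + 1 / (1 - y (last n)) ≠ 1`.
-/

open Matrix Finset

variable {ι α : Type*} [Fintype ι] [DecidableEq ι] [Field α]

theorem Matrix.det_diagonal_add_allOnes {d : ι → α} (hd : ∀ i, d i ≠ 0) :
    (diagonal d + of fun _ _ => (1 : α)).det = (∏ i, d i) * (1 + ∑ i, (d i)⁻¹) := by
  have hfactor : diagonal d + of (fun _ _ => (1 : α)) = diagonal d * (1 + vecMulVec d⁻¹ 1) := by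
    ext i j
    rw [diagonal_mul, add_apply, of_apply, add_apply, vecMulVec_apply]
    rcases eq_or_ne i j with rfl | hij
    · simp [hd i, mul_add]
    · simp [diagonal_apply_ne _ hij, one_apply_ne hij, hd i]
  rw [hfactor, det_mul, det_diagonal, vecMulVec_eq Unit,
    det_one_add_replicateCol_mul_replicateRow]
  simp [dotProduct]

theorem Matrix.det_allOnes_sub_one_add_diagonal {y : ι → α} (hy : ∀ i, y i ≠ 1) :
    ((of fun _ _ => (1 : α)) - 1 + diagonal y).det =
      (∏ i, (y i - 1)) * (1 - ∑ i, 1 / (1 - y i)) := by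
  have hJ : (of fun _ _ => (1 : α)) - 1 + diagonal y =
      diagonal (fun i => y i - 1) + of fun _ _ => 1 := by
    ext i j
    rcases eq_or_ne i j with rfl | hij
    · simp only [add_apply, sub_apply, of_apply, one_apply_eq, diagonal_apply_eq]
      ring
    · simp [diagonal_apply_ne _ hij, one_apply_ne hij]
  rw [hJ, det_diagonal_add_allOnes fun i => sub_ne_zero.2 (hy i), sub_eq_add_neg,
    ← sum_neg_distrib]
  congr 3 with i
  rw [one_div, ← inv_neg, neg_sub]

theorem stmt_3 (n : ℕ) (x : Fin n → ℝ) (h : ∀ i, x i ≠ 1)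
    (ht : (∑ i, 1 / (1 - x i)) = 1)
    (y : Fin (n + 1) → ℝ) (hy : ∀ i : Fin n, y i.castSucc = x i)
    (hlast : y (Fin.last n) ≠ 1) :
    ((Matrix.of fun _ _ : Fin (n + 1) => (1 : ℝ)) - 1 + Matrix.diagonal y).det ≠ 0 := by
  have hy1 : ∀ i, y i ≠ 1 := Fin.lastCases hlast fun i => hy i ▸ h i
  rw [det_allOnes_sub_one_add_diagonal hy1, Fin.sum_univ_castSucc]
  simp only [hy, ht, sub_add_cancel_left]
  exact mul_ne_zero (prod_ne_zero_iff.2 fun i _ => sub_ne_zero.2 (hy1 i))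
    (neg_ne_zero.2 (one_div_ne_zero (sub_ne_zero.2 hlast.symm)))
end

section
/- Let x ∈ ℝ^n satisfy x_i ≠ 1 for all i, let D = diag(1 - x_1, ..., 1 - x_n), and suppose t(x) = Σ_i 1/(1-x_i) ≠ 1. Then jᵀ (J - D)^{-1} j = t(x)/(t(x) - 1), where j is the all-ones column vector and J = j·jᵀ. -/
/-!
Write `J - D` for the all-ones matrix minus `diagonal d` and `t = ∑ i, (d i)⁻¹`.
Since `(J - D) w = (∑ j, w j) • 1 - D w`, the vector `v = D⁻¹ 1 / (t - 1)` is sent to `1`.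
A kernel vector `w` must be `s • D⁻¹ 1` with `s = ∑ j, w j = s t`, hence zero when `t ≠ 1`,
so `J - D` is invertible and `1 ⬝ᵥ (J - D)⁻¹ 1 = ∑ i, v i = t / (t - 1)`.
-/

open Matrix

namespace Matrix

variable {ι K : Type*} [Fintype ι] [DecidableEq ι] [Field K] (d : ι → K)

theorem of_one_sub_diagonal_mulVec_apply (w : ι → K) (i : ι) :
    ((of (fun _ _ : ι => (1 : K)) - diagonal d) *ᵥ w) i = ∑ j, w j - d i * w i := by
  rw [sub_mulVec, Pi.sub_apply, mulVec_diagonal]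
  simp [mulVec, dotProduct]

variable {d}

theorem of_one_sub_diagonal_mulVec_inv_div (hd : ∀ i, d i ≠ 0) (ht : ∑ i, (d i)⁻¹ ≠ 1) :
    (of (fun _ _ : ι => (1 : K)) - diagonal d) *ᵥ (fun i => (d i)⁻¹ / (∑ j, (d j)⁻¹ - 1)) =
      fun _ => 1 := by
  ext i
  rw [of_one_sub_diagonal_mulVec_apply, ← Finset.sum_div, mul_div_assoc',
    mul_inv_cancel₀ (hd i), ← sub_div, div_self (sub_ne_zero.mpr ht)]

theorem isUnit_det_of_one_sub_diagonal (hd : ∀ i, d i ≠ 0) (ht : ∑ i, (d i)⁻¹ ≠ 1) :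
    IsUnit (of (fun _ _ : ι => (1 : K)) - diagonal d).det := by
  refine isUnit_iff_ne_zero.mpr fun hdet => ?_
  obtain ⟨w, hw, hker⟩ := exists_mulVec_eq_zero_iff.mpr hdet
  have hw_eq (i : ι) : w i = (∑ j, w j) * (d i)⁻¹ := by
    have hi := congrFun hker i
    rw [of_one_sub_diagonal_mulVec_apply, Pi.zero_apply, sub_eq_zero] at hi
    rw [hi, mul_comm, inv_mul_cancel_left₀ (hd i)]
  have hs : (∑ j, w j) * ∑ i, (d i)⁻¹ = (∑ j, w j) * 1 := by
    conv_rhs => rw [mul_one, Finset.sum_congr rfl fun i _ => hw_eq i]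
    rw [Finset.mul_sum]
  have hs0 : ∑ j, w j = 0 := by
    by_contra hs0
    exact ht (mul_left_cancel₀ hs0 hs)
  exact hw (funext fun i => by simp [hw_eq i, hs0])

theorem one_dotProduct_inv_of_one_sub_diagonal_mulVec_one (hd : ∀ i, d i ≠ 0)
    (ht : ∑ i, (d i)⁻¹ ≠ 1) :
    (fun _ : ι => (1 : K)) ⬝ᵥ ((of (fun _ _ : ι => (1 : K)) - diagonal d)⁻¹ *ᵥ fun _ => 1) =
      (∑ i, (d i)⁻¹) / (∑ i, (d i)⁻¹ - 1) := by
  have hsol : (of (fun _ _ : ι => (1 : K)) - diagonal d)⁻¹ *ᵥ (fun _ => 1) =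
      fun i => (d i)⁻¹ / (∑ j, (d j)⁻¹ - 1) := by
    let _ := invertibleOfIsUnitDet _ (isUnit_det_of_one_sub_diagonal hd ht)
    exact inv_mulVec_eq_vec (of_one_sub_diagonal_mulVec_inv_div hd ht).symm
  simp only [hsol, dotProduct, one_mul, Finset.sum_div]

end Matrix

theorem stmt_6 (n : ℕ) (x : Fin n → ℝ) (h : ∀ i, x i ≠ 1)
    (ht : (∑ i, 1 / (1 - x i)) ≠ 1) :
    (fun _ : Fin n => (1 : ℝ)) ⬝ᵥ
        (((Matrix.of fun _ _ : Fin n => (1 : ℝ)) -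
          Matrix.diagonal (fun i => 1 - x i))⁻¹.mulVec fun _ => (1 : ℝ)) =
      (∑ i, 1 / (1 - x i)) / ((∑ i, 1 / (1 - x i)) - 1) := by
  simp only [one_div] at ht ⊢
  exact one_dotProduct_inv_of_one_sub_diagonal_mulVec_one
    (fun i => sub_ne_zero.mpr (h i).symm) ht
end

section
/- The coalescence of two singular graphs is singular: if det(A(G₁)) = 0 and det(A(G₂)) = 0, and G is obtained by identifying a vertex of G₁ with a vertex of G₂, then det(A(G)) = 0. -/
/-!
A graph is singular iff its adjacency matrix has a nonzero kernel vector. Take kernel vectors `x`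
of `A(G₁)` and `y` of `A(G₂)`, extended by zero to the vertices of `G`. At a vertex `i ≠ v` of
`G₁`, `A(G)` sees `y` only through the edge `iv`, so `y(v) x + x(v) y - x(v) y(v) eᵥ` is
annihilated by `A(G)` (the diagonal entry at `v` being `0`). It agrees with `y(v) x` on `G₁`, hence
is nonzero when `y(v) ≠ 0`; when `y(v) = 0`, `y` itself is already a kernel vector of `A(G)`.
-/

open scoped Classical

/-- Determinant of the adjacency matrix of the subgraph of `G` induced on `s`. -/
noncomputable def inducedDet {V : Type} [Fintype V] (G : SimpleGraph V) (s : Finset V) : ℝ :=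
  Matrix.det (Matrix.of fun i j : {x // x ∈ s} => if G.Adj i j then (1 : ℝ) else 0)

open Matrix

namespace Matrix

variable {V R : Type} [CommRing R]

section Kernel

variable [Fintype V]

lemma mulVec_apply_eq_submatrix_mulVec (M : Matrix V V R) (s : Finset V) (w : s → R) (i : s) :
    (M *ᵥ fun j => if h : j ∈ s then w ⟨j, h⟩ else 0) i =
      (M.submatrix ((↑) : s → V) (↑) *ᵥ w) i := by
  simp only [mulVec, dotProduct, submatrix_apply]
  rw [← Finset.sum_subset (Finset.subset_univ s) fun j _ hj => by simp [hj],
    ← Finset.sum_coe_sort s]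
  simp

lemma exists_mulVec_eq_zero_on_of_det_submatrix_eq_zero [IsDomain R] (M : Matrix V V R)
    (s : Finset V) (h : (M.submatrix ((↑) : s → V) (↑)).det = 0) :
    ∃ x : V → R, x ≠ 0 ∧ (∀ j ∉ s, x j = 0) ∧ ∀ i ∈ s, (M *ᵥ x) i = 0 := by
  obtain ⟨w, hw, hMw⟩ := exists_mulVec_eq_zero_iff.mpr h
  obtain ⟨k, hk⟩ := Function.ne_iff.mp hw
  refine ⟨fun j => if h : j ∈ s then w ⟨j, h⟩ else 0, Function.ne_iff.mpr ⟨k, by simpa using hk⟩,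
    fun j hj => dif_neg hj, fun i hi => ?_⟩
  simpa [hMw] using mulVec_apply_eq_submatrix_mulVec M s w ⟨i, hi⟩

lemma mulVec_apply_eq_of_support_subset (M : Matrix V V R) {x : V → R} {B : Finset V} {i v : V}
    (hx : ∀ j ∉ B, x j = 0) (hrow : ∀ j ∈ B, j ≠ v → M i j = 0) :
    (M *ᵥ x) i = M i v * x v := by
  refine Fintype.sum_eq_single v fun j hjv => ?_
  by_cases hjB : j ∈ B
  · simp [hrow j hjB hjv]
  · simp [hx j hjB]

end Kernel

section Coalescence

variable [DecidableEq V] {v : V} {A B : Finset V} {x y : V → R}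

def coalesceVec (v : V) (x y : V → R) : V → R :=
  y v • x + x v • y - Pi.single v (y v * x v)

lemma coalesceVec_apply_of_mem (hAB : ∀ i ∈ A, i ∈ B → i = v) (hyB : ∀ j ∉ B, y j = 0)
    {j : V} (hj : j ∈ A) :
    coalesceVec v x y j = y v * x j := by
  by_cases hjv : j = v
  · subst hjv
    simp only [coalesceVec, Pi.sub_apply, Pi.add_apply, Pi.smul_apply, smul_eq_mul,
      Pi.single_eq_same]
    ring
  · have hjB : j ∉ B := fun h => hjv (hAB j hj h)
    simp [coalesceVec, hyB j hjB, hjv]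

lemma mulVec_coalesceVec_eq_zero [Fintype V] {M : Matrix V V R} (hvA : v ∈ A) (hvB : v ∈ B)
    (hcover : ∀ i, i ∈ A ∨ i ∈ B) (hvv : M v v = 0)
    (hsepAB : ∀ i ∈ A, ∀ j ∈ B, i ≠ v → j ≠ v → M i j = 0)
    (hsepBA : ∀ i ∈ B, ∀ j ∈ A, i ≠ v → j ≠ v → M i j = 0)
    (hxA : ∀ j ∉ A, x j = 0) (hyB : ∀ j ∉ B, y j = 0)
    (hMx : ∀ i ∈ A, (M *ᵥ x) i = 0) (hMy : ∀ i ∈ B, (M *ᵥ y) i = 0) :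
    M *ᵥ coalesceVec v x y = 0 := by
  ext i
  simp only [coalesceVec, mulVec_sub, mulVec_add, mulVec_smul, mulVec_single, Pi.sub_apply,
    Pi.add_apply, Pi.smul_apply, smul_eq_mul, col_apply, MulOpposite.smul_eq_mul_unop,
    MulOpposite.unop_op, Pi.zero_apply]
  by_cases hiv : i = v
  · subst hiv
    rw [hMx i hvA, hMy i hvB, hvv]
    ring
  rcases hcover i with hiA | hiB
  · rw [hMx i hiA, mulVec_apply_eq_of_support_subset M hyB (hsepAB i hiA · · hiv)]
    ring
  · rw [hMy i hiB, mulVec_apply_eq_of_support_subset M hxA (hsepBA i hiB · · hiv)]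
    ring

end Coalescence

theorem det_eq_zero_of_coalescence [Fintype V] [IsDomain R] (M : Matrix V V R) {v : V}
    {A B : Finset V} (hvA : v ∈ A) (hvB : v ∈ B) (hcover : ∀ i, i ∈ A ∨ i ∈ B)
    (hAB : ∀ i ∈ A, i ∈ B → i = v) (hvv : M v v = 0)
    (hsepAB : ∀ i ∈ A, ∀ j ∈ B, i ≠ v → j ≠ v → M i j = 0)
    (hsepBA : ∀ i ∈ B, ∀ j ∈ A, i ≠ v → j ≠ v → M i j = 0)
    (hA : (M.submatrix ((↑) : A → V) (↑)).det = 0)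
    (hB : (M.submatrix ((↑) : B → V) (↑)).det = 0) :
    M.det = 0 := by
  obtain ⟨x, hx, hxA, hMx⟩ := exists_mulVec_eq_zero_on_of_det_submatrix_eq_zero M A hA
  obtain ⟨y, hy, hyB, hMy⟩ := exists_mulVec_eq_zero_on_of_det_submatrix_eq_zero M B hB
  refine exists_mulVec_eq_zero_iff.mp ?_
  by_cases hyv : y v = 0
  · refine ⟨y, hy, funext fun i => ?_⟩
    by_cases hiB : i ∈ B
    · exact hMy i hiB
    · have hiA := (hcover i).resolve_right hiB
      have hiv : i ≠ v := fun h => hiB (h ▸ hvB)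
      rw [mulVec_apply_eq_of_support_subset M hyB (hsepAB i hiA · · hiv), hyv, mul_zero,
        Pi.zero_apply]
  · refine ⟨coalesceVec v x y, fun h0 => hx (funext fun j => ?_),
      mulVec_coalesceVec_eq_zero hvA hvB hcover hvv hsepAB hsepBA hxA hyB hMx hMy⟩
    by_cases hjA : j ∈ A
    · simpa [coalesceVec_apply_of_mem hAB hyB hjA, hyv] using congrFun h0 j
    · exact hxA j hjA

end Matrix

theorem SimpleGraph.inducedDet_univ {V : Type} [Fintype V] (G : SimpleGraph V) :
    inducedDet G Finset.univ = (G.adjMatrix ℝ).det :=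
  det_submatrix_equiv_self (Equiv.subtypeUnivEquiv Finset.mem_univ) (G.adjMatrix ℝ)

/-- The coalescence of two singular graphs is singular. -/
theorem stmt_12 {V : Type} [Fintype V] [DecidableEq V] (G : SimpleGraph V)
    (v : V) (A B : Finset V)
    (hU : A ∪ B = Finset.univ) (hI : A ∩ B = {v})
    (hsep : ∀ a ∈ A, ∀ b ∈ B, a ≠ v → b ≠ v → ¬G.Adj a b)
    (h1 : inducedDet G A = 0) (h2 : inducedDet G B = 0) :
    inducedDet G Finset.univ = 0 := by
  have hv : v ∈ A ∩ B := hI ▸ Finset.mem_singleton_self v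
  rw [G.inducedDet_univ]
  refine det_eq_zero_of_coalescence (G.adjMatrix ℝ) (Finset.mem_inter.mp hv).1
    (Finset.mem_inter.mp hv).2 (fun i => Finset.mem_union.mp (hU ▸ Finset.mem_univ i))
    (fun i hiA hiB => Finset.mem_singleton.mp (hI ▸ Finset.mem_inter.mpr ⟨hiA, hiB⟩))
    (by simp) ?_ ?_ h1 h2
  · intro a ha b hb hav hbv
    simp [hsep a ha b hb hav hbv]
  · intro b hb a ha hbv hav
    simp [G.adj_comm b a, hsep a ha b hb hav hbv]
end

section
/- Let G₁, G₂ be disjoint graphs with v₁ ∈ V(G₁), v₂ ∈ V(G₂), and let G^{(k)} be obtained by joining v₁ and v₂ by a path through k new vertices (so G^{(0)} adds the edge {v₁,v₂} directly). Then det(A(G^{(k)})) = -det(A(G^{(k-2)})) for all k ≥ 2; in particular the singularity of G^{(k)} depends only on the parity of k. -/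
open scoped Classical

/-- The graph obtained from the disjoint union of `G₁` and `G₂` by adding a path of
order `k` (i.e. `k` new vertices) between `v₁ ∈ G₁` and `v₂ ∈ G₂`; for `k = 0` the
edge `{v₁, v₂}` itself is added. -/
def pathJoin {V₁ V₂ : Type} (G₁ : SimpleGraph V₁) (G₂ : SimpleGraph V₂)
    (v₁ : V₁) (v₂ : V₂) (k : ℕ) : SimpleGraph ((V₁ ⊕ V₂) ⊕ Fin k) :=
  SimpleGraph.fromRel fun x y =>
    match x, y with
    | .inl (.inl a), .inl (.inl b) => G₁.Adj a b
    | .inl (.inr a), .inl (.inr b) => G₂.Adj a b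
    | .inl (.inl a), .inl (.inr b) => k = 0 ∧ a = v₁ ∧ b = v₂
    | .inl (.inl a), .inr i => a = v₁ ∧ (i : ℕ) = 0
    | .inl (.inr a), .inr i => a = v₂ ∧ (i : ℕ) + 1 = k
    | .inr i, .inr j => (i : ℕ) + 1 = (j : ℕ)
    | _, _ => False

/-- Determinant of the adjacency matrix of a graph. -/
noncomputable def gdet {V : Type} [Fintype V] (G : SimpleGraph V) : ℝ :=
  Matrix.det (Matrix.of fun i j : V => if G.Adj i j then (1 : ℝ) else 0)

section Aux
open Matrix

variable {V₁ V₂ : Type} [Fintype V₁] [Fintype V₂]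
  (G₁ : SimpleGraph V₁) (G₂ : SimpleGraph V₂) (v₁ : V₁) (v₂ : V₂)

private noncomputable def Amat (k : ℕ) :
    Matrix ((V₁ ⊕ V₂) ⊕ Fin k) ((V₁ ⊕ V₂) ⊕ Fin k) ℝ :=
  Matrix.of fun i j => if (pathJoin G₁ G₂ v₁ v₂ k).Adj i j then (1 : ℝ) else 0

private def hub (v₁ : V₁) (k : ℕ) : (V₁ ⊕ V₂) ⊕ Fin k :=
  if h : 0 < k then Sum.inr ⟨k - 1, by omega⟩ else Sum.inl (Sum.inl v₁)

private noncomputable def Cmat (v₁ : V₁) (v₂ : V₂) (k : ℕ) :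
    Matrix ((V₁ ⊕ V₂) ⊕ Fin k) (Fin 2) ℝ :=
  Matrix.of fun x j =>
    if j = 0 then (if x = hub v₁ k then (-1 : ℝ) else 0)
    else (if x = Sum.inl (Sum.inr v₂) then 1 else 0)

private noncomputable def Mmat (k : ℕ) :
    Matrix ((V₁ ⊕ V₂) ⊕ Fin k) ((V₁ ⊕ V₂) ⊕ Fin k) ℝ :=
  Matrix.of fun x y =>
    if (x = Sum.inl (Sum.inr v₂) ∧ y = hub v₁ k) ∨ (x = hub v₁ k ∧ y = Sum.inl (Sum.inr v₂))
    then 0 else Amat G₁ G₂ v₁ v₂ k x y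

private def sgn (V₁ V₂ : Type) (k : ℕ) : ((V₁ ⊕ V₂) ⊕ Fin k) ⊕ Fin 2 → ℝ := fun x =>
  match x with
  | Sum.inl (Sum.inl (Sum.inl _)) => -1
  | Sum.inl (Sum.inr _) => -1
  | _ => 1

private def ee (V₁ V₂ : Type) (k : ℕ) :
    ((V₁ ⊕ V₂) ⊕ Fin k) ⊕ Fin 2 ≃ (V₁ ⊕ V₂) ⊕ Fin (k + 2) :=
  (Equiv.sumAssoc _ _ _).trans ((Equiv.refl (V₁ ⊕ V₂)).sumCongr finSumFinEquiv)

set_option maxHeartbeats 2000000 in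
private lemma entry_eq (k : ℕ) (x y : ((V₁ ⊕ V₂) ⊕ Fin k) ⊕ Fin 2) :
    Amat G₁ G₂ v₁ v₂ (k + 2) (ee V₁ V₂ k x) (ee V₁ V₂ k y)
      = sgn V₁ V₂ k x * (Matrix.fromBlocks (Mmat G₁ G₂ v₁ v₂ k) (Cmat v₁ v₂ k)
          (Cmat v₁ v₂ k)ᵀ (!![0,1;1,0] : Matrix (Fin 2) (Fin 2) ℝ)) x y * sgn V₁ V₂ k y := by
  rcases Nat.eq_zero_or_pos k with h0 | hpos
  · subst h0
    have hh : hub (V₂ := V₂) v₁ 0 = Sum.inl (Sum.inl v₁) := by simp [hub]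
    obtain (((a|b)|j)|t) := x <;> obtain (((a'|b')|j')|t') := y <;>
      (try exact j.elim0) <;> (try exact j'.elim0) <;>
      simp only [ee, Equiv.trans_apply, Equiv.sumAssoc_apply_inl_inl, Equiv.sumAssoc_apply_inl_inr,
        Equiv.sumAssoc_apply_inr, Equiv.sumCongr_apply, Sum.map_inl, Sum.map_inr, Equiv.coe_refl,
        id_eq, finSumFinEquiv_apply_left, finSumFinEquiv_apply_right, Amat, Matrix.of_apply,
        pathJoin, SimpleGraph.fromRel_adj, sgn, Matrix.fromBlocks_apply₁₁, Matrix.fromBlocks_apply₁₂,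
        Matrix.fromBlocks_apply₂₁, Matrix.fromBlocks_apply₂₂, Mmat, Cmat, Matrix.transpose_apply,
        hh, Fin.coe_castAdd, Fin.coe_natAdd, ne_eq, Sum.inr.injEq, Sum.inl.injEq] <;>
      (try fin_cases t) <;> (try fin_cases t') <;>
      (try split_ifs) <;>
      (try norm_num [Fin.ext_iff, Matrix.cons_val_zero, Matrix.cons_val_one, Matrix.head_cons]) <;>
      (try simp_all [Fin.ext_iff]) <;> (try omega) <;> (try ring)
  · have hh : hub (V₂ := V₂) v₁ k = Sum.inr ⟨k - 1, by omega⟩ := by simp [hub, hpos]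
    have hk1 : ((⟨k - 1, by omega⟩ : Fin k) : ℕ) = k - 1 := rfl
    obtain (((a|b)|j)|t) := x <;> obtain (((a'|b')|j')|t') := y <;>
      simp only [ee, Equiv.trans_apply, Equiv.sumAssoc_apply_inl_inl, Equiv.sumAssoc_apply_inl_inr,
        Equiv.sumAssoc_apply_inr, Equiv.sumCongr_apply, Sum.map_inl, Sum.map_inr, Equiv.coe_refl,
        id_eq, finSumFinEquiv_apply_left, finSumFinEquiv_apply_right, Amat, Matrix.of_apply,
        pathJoin, SimpleGraph.fromRel_adj, sgn, Matrix.fromBlocks_apply₁₁, Matrix.fromBlocks_apply₁₂,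
        Matrix.fromBlocks_apply₂₁, Matrix.fromBlocks_apply₂₂, Mmat, Cmat, Matrix.transpose_apply,
        hh, Fin.coe_castAdd, Fin.coe_natAdd, ne_eq, Sum.inr.injEq, Sum.inl.injEq, Fin.ext_iff]
    · -- (a, a')
      simp <;> (try split_ifs <;> norm_num) <;> (try simp) <;> (try omega)
    · -- (a, b')
      simp [hpos.ne']
    · -- (a, j')
      simp <;> (try split_ifs <;> norm_num) <;> (try simp) <;> (try omega)
    · -- (a, t')
      simp [hpos.ne']
    · -- (b, a')
      simp [hpos.ne']
    · -- (b, b')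
      simp <;> (try split_ifs <;> norm_num) <;> (try simp) <;> (try omega)
    · -- (b, j')
      have hj := j'.is_lt
      by_cases hb : b = v₂ <;> by_cases h2 : (j' : ℕ) + 1 = k <;>
        simp [hb, h2, show ¬((j' : ℕ) + 1 = k + 2) from by omega,
          show ((j' : ℕ) = k - 1) ↔ ((j' : ℕ) + 1 = k) from by omega] <;> (try split_ifs <;> norm_num) <;> (try simp) <;> (try omega)
    · -- (b, t')
      fin_cases t' <;> simp <;> (try split_ifs <;> norm_num) <;> (try simp) <;> (try omega)
    · -- (j, a')
      simp <;> (try split_ifs <;> norm_num) <;> (try simp) <;> (try omega)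
    · -- (j, b')
      have hj := j.is_lt
      by_cases hb : b' = v₂ <;> by_cases h2 : (j : ℕ) + 1 = k <;>
        simp [hb, h2, show ¬((j : ℕ) + 1 = k + 2) from by omega,
          show ((j : ℕ) = k - 1) ↔ ((j : ℕ) + 1 = k) from by omega] <;> (try split_ifs <;> norm_num) <;> (try simp) <;> (try omega)
    · -- (j, j')
      simp <;> (try split_ifs <;> norm_num) <;> (try simp) <;> (try omega)
    · -- (j, t')
      have hj := j.is_lt
      fin_cases t' <;>
        by_cases h2 : (j : ℕ) + 1 = k <;>
          simp [h2, show ¬((j : ℕ) = k) from by omega,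
            show ((j : ℕ) = k - 1) ↔ ((j : ℕ) + 1 = k) from by omega,
            show ¬(k + 1 = (j : ℕ)) from by omega] <;> (try split_ifs <;> norm_num) <;> (try simp) <;> (try omega)
    · -- (t, a')
      simp [hpos.ne']
    · -- (t, b')
      fin_cases t <;> simp <;> (try split_ifs <;> norm_num) <;> (try simp) <;> (try omega)
    · -- (t, j')
      have hj := j'.is_lt
      fin_cases t <;>
        by_cases h2 : (j' : ℕ) + 1 = k <;>
          simp [h2, show ¬(k = (j' : ℕ)) from by omega,
            show ((j' : ℕ) = k - 1) ↔ ((j' : ℕ) + 1 = k) from by omega,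
            show ¬(k + 1 = (j' : ℕ)) from by omega] <;> (try split_ifs <;> norm_num) <;> (try simp) <;> (try omega)
    · -- (t, t')
      fin_cases t <;> fin_cases t' <;> norm_num <;> (try split_ifs <;> norm_num) <;> (try simp) <;> (try omega)

private lemma hub_ne (k : ℕ) : hub (V₂ := V₂) v₁ k ≠ Sum.inl (Sum.inr v₂) := by
  unfold hub; split <;> simp

private lemma adj_hub (k : ℕ) :
    (pathJoin G₁ G₂ v₁ v₂ k).Adj (Sum.inl (Sum.inr v₂)) (hub v₁ k) := by
  rcases Nat.eq_zero_or_pos k with h0 | hpos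
  · unfold hub
    rw [dif_neg (by omega)]
    simp only [pathJoin, SimpleGraph.fromRel_adj]
    exact ⟨by simp, Or.inr ⟨h0, trivial, trivial⟩⟩
  · unfold hub
    rw [dif_pos hpos]
    simp only [pathJoin, SimpleGraph.fromRel_adj]
    exact ⟨by simp, Or.inl ⟨trivial, by omega⟩⟩

private lemma schur_eq (k : ℕ) :
    Mmat G₁ G₂ v₁ v₂ k - Cmat v₁ v₂ k * (!![0,1;1,0] : Matrix (Fin 2) (Fin 2) ℝ) * (Cmat v₁ v₂ k)ᵀ
      = Amat G₁ G₂ v₁ v₂ k := by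
  have hvh := hub_ne (V₂ := V₂) v₁ v₂ k
  have hadj := adj_hub G₁ G₂ v₁ v₂ k
  have hA : Amat G₁ G₂ v₁ v₂ k (Sum.inl (Sum.inr v₂)) (hub v₁ k) = 1 := by
    simp [Amat, hadj]
  have hA' : Amat G₁ G₂ v₁ v₂ k (hub v₁ k) (Sum.inl (Sum.inr v₂)) = 1 := by
    simp [Amat, hadj.symm]
  ext x y
  simp only [Matrix.sub_apply, Matrix.mul_apply, Fin.sum_univ_two, Matrix.transpose_apply,
    Cmat, Mmat, Matrix.of_apply, Matrix.cons_val', Matrix.cons_val_zero, Matrix.cons_val_one,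
    Matrix.head_cons, Matrix.empty_val', Matrix.cons_val_fin_one, Matrix.head_fin_const]
  norm_num
  by_cases h1 : x = Sum.inl (Sum.inr v₂) <;> by_cases h2 : y = hub v₁ k <;>
    by_cases h3 : x = hub v₁ k <;> by_cases h4 : y = Sum.inl (Sum.inr v₂) <;>
    simp_all [hvh, hA, hA']

set_option maxHeartbeats 1000000 in
private lemma key (k : ℕ) :
    gdet (pathJoin G₁ G₂ v₁ v₂ (k + 2)) = -gdet (pathJoin G₁ G₂ v₁ v₂ k) := by
  classical
  set D : Matrix (Fin 2) (Fin 2) ℝ := (!![0,1;1,0] : Matrix (Fin 2) (Fin 2) ℝ) with hDdef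
  have hD : D * D = 1 := by
    ext i j
    fin_cases i <;> fin_cases j <;>
      simp [hDdef, Matrix.mul_apply, Fin.sum_univ_two, Matrix.one_apply]
  letI : Invertible D := ⟨D, hD, hD⟩
  have hinv : ⅟D = D := invOf_eq_right_inv hD
  set F := Matrix.fromBlocks (Mmat G₁ G₂ v₁ v₂ k) (Cmat v₁ v₂ k) (Cmat v₁ v₂ k)ᵀ D with hF
  have h1 : gdet (pathJoin G₁ G₂ v₁ v₂ (k + 2)) = (Amat G₁ G₂ v₁ v₂ (k + 2)).det := by
    unfold gdet Amat; congr!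
  have h0 : gdet (pathJoin G₁ G₂ v₁ v₂ k) = (Amat G₁ G₂ v₁ v₂ k).det := by
    unfold gdet Amat; congr!
  rw [h1, h0]
  have h2 : (Amat G₁ G₂ v₁ v₂ (k + 2)).det
      = (Matrix.diagonal (sgn V₁ V₂ k) * F * Matrix.diagonal (sgn V₁ V₂ k)).det := by
    rw [← Matrix.det_submatrix_equiv_self (ee V₁ V₂ k)]
    congr 1
    ext x y
    rw [Matrix.submatrix_apply, Matrix.mul_diagonal, Matrix.diagonal_mul]
    exact entry_eq G₁ G₂ v₁ v₂ k x y
  have h3 : F.det = -(Amat G₁ G₂ v₁ v₂ k).det := by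
    rw [hF, Matrix.det_fromBlocks₂₂, hinv, schur_eq]
    have hd : D.det = -1 := by rw [hDdef]; simp [Matrix.det_fin_two_of]
    rw [hd]; ring
  rw [h2, Matrix.det_mul, Matrix.det_mul, Matrix.det_diagonal, h3]
  have h4 : (∏ i, sgn V₁ V₂ k i) * (∏ i, sgn V₁ V₂ k i) = 1 := by
    rw [← Finset.prod_mul_distrib]
    apply Finset.prod_eq_one
    rintro (((a | b) | j) | t) -
    · norm_num [sgn]
    · norm_num [sgn]
    · norm_num [sgn]
    · norm_num [sgn]
  have h5 : (∏ i, sgn V₁ V₂ k i) * -(Amat G₁ G₂ v₁ v₂ k).det * (∏ i, sgn V₁ V₂ k i)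
      = -((∏ i, sgn V₁ V₂ k i) * (∏ i, sgn V₁ V₂ k i) * (Amat G₁ G₂ v₁ v₂ k).det) := by
    ring
  rw [h5, h4, one_mul]

end Aux


/-- `det G^{(k)} = -det G^{(k-2)}`; in particular the singularity of `G^{(k)}` depends
only on the parity of `k`. -/
theorem stmt_15 {V₁ V₂ : Type} [Fintype V₁] [Fintype V₂]
    (G₁ : SimpleGraph V₁) (G₂ : SimpleGraph V₂) (v₁ : V₁) (v₂ : V₂) :
    (∀ k : ℕ, gdet (pathJoin G₁ G₂ v₁ v₂ (k + 2)) = -gdet (pathJoin G₁ G₂ v₁ v₂ k)) ∧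
      ∀ k l : ℕ, k % 2 = l % 2 →
        (gdet (pathJoin G₁ G₂ v₁ v₂ k) = 0 ↔ gdet (pathJoin G₁ G₂ v₁ v₂ l) = 0) := by
  refine ⟨key G₁ G₂ v₁ v₂, ?_⟩
  have h2 : ∀ m k : ℕ, (gdet (pathJoin G₁ G₂ v₁ v₂ (k + 2 * m)) = 0 ↔
      gdet (pathJoin G₁ G₂ v₁ v₂ k) = 0) := by
    intro m
    induction m with
    | zero => intro k; rfl
    | succ n ih =>
      intro k
      have : k + 2 * (n + 1) = (k + 2 * n) + 2 := by ring
      rw [this, key G₁ G₂ v₁ v₂, neg_eq_zero, ih]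
  intro k l hkl
  rcases le_total k l with h | h
  · have : l = k + 2 * ((l - k) / 2) := by omega
    rw [this, h2]
  · have : k = l + 2 * ((k - l) / 2) := by omega
    rw [this, h2]
end

section
/- A tree (or forest) is nonsingular, i.e., its adjacency matrix has nonzero determinant, if and only if it has a perfect matching. -/
/-!
Expanding the determinant, only the permutations `σ` with `v ~ σ v` for every vertex `v`
contribute. In a forest each such `σ` is a fixed-point-free involution, i.e. a perfect matching,
and all of them have sign `(-1) ^ (n / 2)`. Hence there is no cancellation:
`det A = (-1) ^ (n / 2) · #(perfect matchings)`.
-/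

open Finset Function Equiv

theorem Equiv.Perm.sign_eq_neg_one_pow_of_involutive {α : Type*} [Fintype α] [DecidableEq α]
    {σ : Perm α} (hσ : Involutive σ) (hfix : ∀ x, σ x ≠ x) :
    sign σ = (-1) ^ (Fintype.card α / 2) := by
  have hsq : σ ^ 2 = 1 := by ext x; simp [sq, hσ x]
  have hnofix : Fintype.card (fixedPoints σ) = 0 :=
    Fintype.card_eq_zero_iff.2 ⟨fun x => hfix x x.2⟩
  rw [sign_of_pow_two_eq_one hsq, hnofix, Nat.sub_zero]

namespace SimpleGraph

section Forest

variable {V : Type*} {G : SimpleGraph V}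

def iterateWalk (f : V → V) (hf : ∀ v, G.Adj v (f v)) (v : V) : (n : ℕ) → G.Walk v (f^[n] v)
  | 0 => .nil
  | n + 1 => .cons (hf v) (iterateWalk f hf (f v) n)

section IterateWalk

variable {f : V → V} (hf : ∀ v, G.Adj v (f v))

lemma length_iterateWalk (v : V) (n : ℕ) : (iterateWalk f hf v n).length = n := by
  induction n generalizing v with
  | zero => rfl
  | succ n ih => simp [iterateWalk, ih]

lemma support_iterateWalk (v : V) (n : ℕ) :
    (iterateWalk f hf v n).support = (List.range (n + 1)).map (f^[·] v) := by
  induction n generalizing v with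
  | zero => rfl
  | succ n ih =>
    rw [List.range_succ_eq_map, List.map_cons, List.map_map]
    simp [iterateWalk, ih, comp_def]

lemma isPath_iterateWalk {v : V} {n : ℕ} (hn : n < minimalPeriod f v) :
    (iterateWalk f hf v n).IsPath := by
  rw [Walk.isPath_def, support_iterateWalk]
  refine List.Nodup.map_on (fun a ha b hb hab => ?_) List.nodup_range
  rw [List.mem_range] at ha hb
  exact iterate_injOn_Iio_minimalPeriod (Set.mem_Iio.2 (by omega)) (Set.mem_Iio.2 (by omega)) hab

end IterateWalk

/-- Following `f` around a periodic orbit of length `m` gives a path of length `m - 1` from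
`f v` to `v`; in a forest it must be the edge between them, so `m = 2`. -/
theorem IsAcyclic.apply_apply_eq_of_mem_periodicPts (hG : G.IsAcyclic) {f : V → V}
    (hf : ∀ v, G.Adj v (f v)) {v : V} (hv : v ∈ periodicPts f) : f (f v) = v := by
  set m := minimalPeriod f v
  have hm : 0 < m := minimalPeriod_pos_of_mem_periodicPts hv
  have hend : f^[m - 1] (f v) = v := by
    rw [← iterate_succ_apply, Nat.succ_eq_add_one, Nat.sub_add_cancel hm]
    exact iterate_minimalPeriod
  have horbit : (iterateWalk f hf (f v) (m - 1)).IsPath :=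
    isPath_iterateWalk hf (by rw [minimalPeriod_apply hv]; omega)
  have hunique := (hG.subsingleton_path _ _).elim
    ⟨_, (Walk.isPath_copy _ rfl hend).2 horbit⟩ ⟨_, (hf v).symm.isPath_toWalk⟩
  have hlen := congrArg (Walk.length ∘ Subtype.val) hunique
  simp only [comp_apply, Walk.length_copy, length_iterateWalk, Adj.length_toWalk] at hlen
  have hm2 : m = 2 := by omega
  have hperiod : f^[m] v = v := iterate_minimalPeriod
  rwa [hm2] at hperiod

theorem IsAcyclic.involutive_of_forall_adj [Finite V] (hG : G.IsAcyclic) {σ : Perm V}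
    (hσ : ∀ v, G.Adj v (σ v)) : Involutive σ := fun v =>
  hG.apply_apply_eq_of_mem_periodicPts hσ (σ.injective.mem_periodicPts v)

theorem exists_isPerfectMatching_iff_exists_involutive :
    (∃ M : G.Subgraph, M.IsPerfectMatching) ↔ ∃ f : V → V, Involutive f ∧ ∀ v, G.Adj v (f v) := by
  constructor
  · rintro ⟨M, hM⟩
    choose f hf hunique using Subgraph.isPerfectMatching_iff.1 hM
    exact ⟨f, fun v => (hunique _ _ (hf v).symm).symm, fun v => M.adj_sub (hf v)⟩
  · rintro ⟨f, hinv, hadj⟩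
    refine ⟨⟨Set.univ, fun v w => f v = w, ?_, ?_, ?_⟩, ?_⟩
    · rintro v _ rfl
      exact hadj v
    · intros
      trivial
    · exact ⟨fun v w h => h ▸ hinv v⟩
    · exact Subgraph.isPerfectMatching_iff.2 fun v => existsUnique_eq'

end Forest

section Determinant

variable {V : Type*} [Fintype V] [DecidableEq V] (G : SimpleGraph V) [DecidableRel G.Adj]
  (R : Type*) [CommRing R]

theorem det_adjMatrix :
    (G.adjMatrix R).det = ∑ σ : Perm V with ∀ v, G.Adj v (σ v), ((Perm.sign σ : ℤ) : R) := by
  rw [Matrix.det_apply', sum_filter]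
  refine sum_congr rfl fun σ _ => ?_
  simp only [adjMatrix_apply, Fintype.prod_boole, G.adj_comm]
  split_ifs <;> simp

variable {G} in
theorem IsAcyclic.det_adjMatrix (hG : G.IsAcyclic) :
    (G.adjMatrix R).det = (-1) ^ (Fintype.card V / 2) * #{σ : Perm V | ∀ v, G.Adj v (σ v)} := by
  rw [G.det_adjMatrix R, sum_congr rfl fun σ hσ => ?_, sum_const, nsmul_eq_mul, mul_comm]
  have hσ : ∀ v, G.Adj v (σ v) := (mem_filter.1 hσ).2
  rw [Perm.sign_eq_neg_one_pow_of_involutive (hG.involutive_of_forall_adj hσ) fun v => (hσ v).ne']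
  simp

end Determinant

end SimpleGraph

/-- A forest is nonsingular (its adjacency matrix has nonzero determinant) if and only if
it has a perfect matching. -/
theorem stmt_16 {V : Type} [Fintype V] [DecidableEq V] (G : SimpleGraph V)
    [DecidableRel G.Adj] (hforest : G.IsAcyclic) :
    (G.adjMatrix ℝ).det ≠ 0 ↔ ∃ M : G.Subgraph, M.IsPerfectMatching := by
  rw [hforest.det_adjMatrix ℝ, mul_ne_zero_iff, and_iff_right (pow_ne_zero _ (by norm_num)),
    Nat.cast_ne_zero, card_ne_zero, filter_nonempty_iff,
    SimpleGraph.exists_isPerfectMatching_iff_exists_involutive]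
  simp only [mem_univ, true_and]
  constructor
  · rintro ⟨σ, hσ⟩
    exact ⟨σ, hforest.involutive_of_forall_adj hσ, hσ⟩
  · rintro ⟨f, hf, hadj⟩
    exact ⟨hf.toPerm, hadj⟩
end
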